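/- The map f₀ : E → ℂ₊ \ {u₀} given by f₀(v) = √3·i·(v − 1)/(1 − |v|²) + u₀, where E = {v ∈ ℂ : |v| > 1}, is a homeomorphism, and its inverse is given by f₀⁻¹(u) = (u − conj(u₀)) / (conj(u) − conj(u₀)) for u ∈ ℂ₊ \ {u₀}. -/

import Mathlib

/-!
Since `√3 i = u₀ - conj u₀`, the map `f₀` is `v ↦ (a - ā)(v - 1)/(1 - |v|²) + a` for `a = u₀`,
and everything works for any `a` in the upper half-plane. On `|v| > 1` one computes
`Im f(v) = Im a · |v - 1|² / (|v|² - 1) > 0`; conversely `u ↦ (u - ā)/(ū - ā)` lands in `|v| > 1`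
because a point of the upper half-plane is closer to `a` than to its reflection `ā`. That the two
maps are mutually inverse is a rational identity in `u, ū, a, ā` once `|g|²` is written as `g ḡ`.
-/

/-- The point `u₀ = (1 + √3 i)/2`. -/
noncomputable def u0 : ℂ := (1 + Real.sqrt 3 * Complex.I) / 2

/-- The map `f₀(v) = √3 i (v − 1)/(1 − |v|²) + u₀`. -/
noncomputable def f0 (v : ℂ) : ℂ :=
  (Real.sqrt 3 : ℂ) * Complex.I * (v - 1) / (1 - ((‖v‖ : ℝ) : ℂ) ^ 2) + u0

open Complex ComplexConjugate Set

noncomputable def exteriorToHalfPlane (a v : ℂ) : ℂ :=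
  (a - conj a) * (v - 1) / (1 - (‖v‖ : ℂ) ^ 2) + a

noncomputable def halfPlaneToExterior (a u : ℂ) : ℂ :=
  (u - conj a) / (conj u - conj a)

lemma conj_sub_conj_ne_zero {u a : ℂ} (h : u ≠ a) : conj u - conj a ≠ 0 := by
  rw [← map_sub]
  exact (map_ne_zero _).2 (sub_ne_zero.2 h)

lemma sub_conj_ne_zero {a : ℂ} (ha : a.im ≠ 0) : a - conj a ≠ 0 := by
  rw [sub_conj]
  exact mul_ne_zero (by exact_mod_cast mul_ne_zero two_ne_zero ha) I_ne_zero

lemma norm_sq_ne_one {v : ℂ} (hv : ‖v‖ ≠ 1) : ‖v‖ ^ 2 ≠ 1 :=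
  (pow_eq_one_iff_of_nonneg (norm_nonneg v) two_ne_zero).not.2 hv

lemma one_sub_norm_sq_ne_zero {v : ℂ} (hv : ‖v‖ ≠ 1) : (1 : ℂ) - (‖v‖ : ℂ) ^ 2 ≠ 0 := by
  rw [sub_ne_zero, ne_comm]
  exact_mod_cast norm_sq_ne_one hv

lemma ne_one_of_one_lt_norm {v : ℂ} (hv : 1 < ‖v‖) : v ≠ 1 := by
  rintro rfl
  simp at hv

lemma ofReal_norm_sq (v : ℂ) : (‖v‖ : ℂ) ^ 2 = v * conj v := by
  rw [← ofReal_pow, Complex.sq_norm, mul_conj]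

lemma norm_sub_lt_norm_sub_conj {u a : ℂ} (hu : 0 < u.im) (ha : 0 < a.im) :
    ‖u - a‖ < ‖u - conj a‖ := by
  rw [← sq_lt_sq₀ (norm_nonneg _) (norm_nonneg _), Complex.sq_norm, Complex.sq_norm,
    normSq_apply, normSq_apply]
  simp only [sub_re, sub_im, conj_re, conj_im]
  nlinarith [mul_pos hu ha]

section

variable {a : ℂ}

lemma im_exteriorToHalfPlane {v : ℂ} (hv : ‖v‖ ≠ 1) :
    (exteriorToHalfPlane a v).im = a.im * ‖v - 1‖ ^ 2 / (‖v‖ ^ 2 - 1) := by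
  have hden : 1 - ‖v‖ ^ 2 ≠ 0 := sub_ne_zero.2 (norm_sq_ne_one hv).symm
  have hden' : ‖v‖ ^ 2 - 1 ≠ 0 := sub_ne_zero.2 (norm_sq_ne_one hv)
  have hnorm : ‖v - 1‖ ^ 2 = ‖v‖ ^ 2 - 2 * v.re + 1 := by
    rw [Complex.sq_norm, Complex.sq_norm, normSq_apply, normSq_apply]
    simp only [sub_re, sub_im, one_re, one_im]
    ring
  have hcast : (1 : ℂ) - (‖v‖ : ℂ) ^ 2 = ((1 - ‖v‖ ^ 2 : ℝ) : ℂ) := by push_cast; ring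
  have him : ((2 * a.im : ℝ) * I * (v - 1)).im = 2 * a.im * (v.re - 1) := by simp
  rw [exteriorToHalfPlane, hcast, sub_conj, add_im, div_ofReal_im, him, hnorm]
  field_simp
  ring

lemma exteriorToHalfPlane_ne {v : ℂ} (ha : a.im ≠ 0) (hv : ‖v‖ ≠ 1) (hv1 : v ≠ 1) :
    exteriorToHalfPlane a v ≠ a := by
  rw [exteriorToHalfPlane, Ne, add_eq_right]
  exact div_ne_zero (mul_ne_zero (sub_conj_ne_zero ha) (sub_ne_zero.2 hv1))
    (one_sub_norm_sq_ne_zero hv)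

lemma halfPlaneToExterior_exteriorToHalfPlane {v : ℂ} (ha : a.im ≠ 0) (hv : ‖v‖ ≠ 1)
    (hv1 : v ≠ 1) : halfPlaneToExterior a (exteriorToHalfPlane a v) = v := by
  have hden := one_sub_norm_sq_ne_zero hv
  have hconj : 1 - conj v ≠ 0 := sub_ne_zero.2 fun h => hv1 (by simpa using congrArg conj h.symm)
  have hsub := sub_conj_ne_zero ha
  have hnum : exteriorToHalfPlane a v - conj a =
      (a - conj a) * v * (1 - conj v) / (1 - (‖v‖ : ℂ) ^ 2) := by
    rw [exteriorToHalfPlane]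
    field_simp
    rw [ofReal_norm_sq]
    ring
  have hdenom : conj (exteriorToHalfPlane a v) - conj a =
      (a - conj a) * (1 - conj v) / (1 - (‖v‖ : ℂ) ^ 2) := by
    simp only [exteriorToHalfPlane, map_add, map_div₀, map_mul, map_sub, map_one, map_pow,
      conj_ofReal, conj_conj]
    field_simp
    ring
  rw [halfPlaneToExterior, hnum, hdenom]
  field_simp

lemma exteriorToHalfPlane_halfPlaneToExterior {u : ℂ} (ha : a.im ≠ 0) (hu : u.im ≠ 0)
    (hua : u ≠ a) : exteriorToHalfPlane a (halfPlaneToExterior a u) = u := by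
  have hu' := sub_conj_ne_zero hu
  have ha' := sub_conj_ne_zero ha
  have hden := conj_sub_conj_ne_zero hua
  have hua' := sub_ne_zero.2 hua
  have hsub_one : halfPlaneToExterior a u - 1 = (u - conj u) / (conj u - conj a) := by
    rw [halfPlaneToExterior]
    field_simp
    ring
  have hone_sub : 1 - (‖halfPlaneToExterior a u‖ : ℂ) ^ 2 =
      (a - conj a) * (u - conj u) / ((conj u - conj a) * (u - a)) := by
    rw [ofReal_norm_sq, halfPlaneToExterior, map_div₀, map_sub, map_sub, conj_conj, conj_conj]
    field_simp
    ring
  rw [exteriorToHalfPlane, hsub_one, hone_sub]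
  field_simp
  ring

lemma one_lt_norm_halfPlaneToExterior {u : ℂ} (ha : 0 < a.im) (hu : 0 < u.im) (hua : u ≠ a) :
    1 < ‖halfPlaneToExterior a u‖ := by
  rw [halfPlaneToExterior, norm_div, ← map_sub, norm_conj,
    one_lt_div (norm_pos_iff.2 (sub_ne_zero.2 hua))]
  exact norm_sub_lt_norm_sub_conj hu ha

lemma im_exteriorToHalfPlane_pos {v : ℂ} (ha : 0 < a.im) (hv : 1 < ‖v‖) :
    0 < (exteriorToHalfPlane a v).im := by
  rw [im_exteriorToHalfPlane hv.ne']
  have : 1 < ‖v‖ ^ 2 := one_lt_pow₀ hv two_ne_zero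
  have : 0 < ‖v - 1‖ := norm_pos_iff.2 (sub_ne_zero.2 (ne_one_of_one_lt_norm hv))
  positivity

variable (a)

lemma continuousOn_exteriorToHalfPlane : ContinuousOn (exteriorToHalfPlane a) {v | ‖v‖ ≠ 1} :=
  ((continuousOn_const.mul (by fun_prop)).div (by fun_prop)
    fun _ hv => one_sub_norm_sq_ne_zero hv).add continuousOn_const

lemma continuousOn_halfPlaneToExterior : ContinuousOn (halfPlaneToExterior a) {a}ᶜ :=
  (by fun_prop : Continuous fun u => u - conj a).continuousOn.div (by fun_prop)
    fun _ hu => conj_sub_conj_ne_zero hu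

variable {a}

theorem mapsTo_exteriorToHalfPlane (ha : 0 < a.im) :
    MapsTo (exteriorToHalfPlane a) {v | 1 < ‖v‖} ({u | 0 < u.im} \ {a}) := fun _ hv =>
  ⟨im_exteriorToHalfPlane_pos ha hv,
    exteriorToHalfPlane_ne ha.ne' (ne_of_gt hv) (ne_one_of_one_lt_norm hv)⟩

theorem mapsTo_halfPlaneToExterior (ha : 0 < a.im) :
    MapsTo (halfPlaneToExterior a) ({u | 0 < u.im} \ {a}) {v | 1 < ‖v‖} := fun _ hu =>
  one_lt_norm_halfPlaneToExterior ha hu.1 hu.2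

theorem invOn_halfPlaneToExterior (ha : 0 < a.im) :
    InvOn (halfPlaneToExterior a) (exteriorToHalfPlane a) {v | 1 < ‖v‖}
      ({u | 0 < u.im} \ {a}) :=
  ⟨fun _ hv => halfPlaneToExterior_exteriorToHalfPlane ha.ne' (ne_of_gt hv)
      (ne_one_of_one_lt_norm hv),
    fun _ hu => exteriorToHalfPlane_halfPlaneToExterior ha.ne' hu.1.ne' hu.2⟩

end

lemma u0_sub_conj : u0 - conj u0 = (Real.sqrt 3 : ℂ) * I := by
  have him : u0.im = Real.sqrt 3 / 2 := by simp [u0]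
  rw [sub_conj, him]
  push_cast
  ring

lemma f0_eq_exteriorToHalfPlane : f0 = exteriorToHalfPlane u0 := by
  ext v
  rw [f0, exteriorToHalfPlane, u0_sub_conj]

/-- `f₀` is a homeomorphism from `E = {|v| > 1}` onto `ℂ₊ \ {u₀}`, with inverse
`u ↦ (u − conj u₀)/(conj u − conj u₀)`. -/
theorem f0_homeomorphism :
    Set.BijOn f0 {v : ℂ | 1 < ‖v‖} ({u : ℂ | 0 < u.im} \ {u0}) ∧
    ContinuousOn f0 {v : ℂ | 1 < ‖v‖} ∧
    ContinuousOn (fun u : ℂ => (u - (starRingEnd ℂ) u0) / ((starRingEnd ℂ) u - (starRingEnd ℂ) u0))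
      ({u : ℂ | 0 < u.im} \ {u0}) ∧
    Set.InvOn (fun u : ℂ => (u - (starRingEnd ℂ) u0) / ((starRingEnd ℂ) u - (starRingEnd ℂ) u0))
      f0 {v : ℂ | 1 < ‖v‖} ({u : ℂ | 0 < u.im} \ {u0}) := by
  have hu0 : 0 < u0.im := by simp [u0]
  have hinv := invOn_halfPlaneToExterior hu0
  rw [f0_eq_exteriorToHalfPlane]
  exact ⟨hinv.bijOn (mapsTo_exteriorToHalfPlane hu0) (mapsTo_halfPlaneToExterior hu0),
    (continuousOn_exteriorToHalfPlane u0).mono fun _ hv => ne_of_gt hv,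
    (continuousOn_halfPlaneToExterior u0).mono fun _ hu => hu.2, hinv⟩
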